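/- Let d ∈ ℕ, 1 ≤ r < 2, ρ ≥ 0, N > 0, and t ≥ t₀ ≥ 0. Let Z₂ = Z₂(t,t₀,N) := {ξ ∈ ℝ^d : (1+t₀)|ξ| ≤ N ≤ (1+t)|ξ|}, and set α := 1/2 + ρ − d(2−r)/(2r). Then the L^{2r/(2−r)}(Z₂) norm of the function ξ ↦ |ξ|^{−1/2−ρ} satisfies: ‖|ξ|^{−1/2−ρ}‖_{L^{2r/(2−r)}(Z₂)} ≤ C (1+t₀)^α if α < 0; ≤ C {log(1+t)}^{1/2} if α = 0 and r = 1; ≤ C (1+t)^α if α > 0; where C depends only on d, r, ρ, and N (not on t or t₀ beyond the indicated dependence). -/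

import Mathlib

open MeasureTheory Real Filter Topology
open scoped ENNReal FourierTransform Classical

noncomputable section

/-- `d`-dimensional Euclidean space. -/
abbrev Ed (d : ℕ) : Type := EuclideanSpace ℝ (Fin d)

variable {d : ℕ}

/-- First time derivative `∂ₜ v`. -/
def dt1 (v : ℝ → Ed d → ℝ) (t : ℝ) (x : Ed d) : ℝ := deriv (fun s => v s x) t

/-- Second time derivative `∂ₜ² v`. -/
def dt2 (v : ℝ → Ed d → ℝ) (t : ℝ) (x : Ed d) : ℝ := deriv (deriv (fun s => v s x)) t

/-- Spatial Laplacian, as the sum of the second derivatives in the coordinate directions. -/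
def lapl (f : Ed d → ℝ) (x : Ed d) : ℝ :=
  ∑ i : Fin d, iteratedFDeriv ℝ 2 f x ![EuclideanSpace.single i 1, EuclideanSpace.single i 1]

/-- `L²` norm. -/
def L2N (f : Ed d → ℝ) : ℝ≥0∞ := eLpNorm f 2 volume

/-- `L^r` norm. -/
def LrN (r : ℝ) (f : Ed d → ℝ) : ℝ≥0∞ := eLpNorm f (ENNReal.ofReal r) volume

/-- Homogeneous `Ḣ¹` seminorm `‖∇f‖_{L²}`. -/
def H1dotN (f : Ed d → ℝ) : ℝ≥0∞ := eLpNorm (fun x => ‖fderiv ℝ f x‖) 2 volume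

/-- The real part of `ν`, where `ν = (1/2)√(1-4μ)` if `μ ≤ 1/4` and `ν = (i/2)√(4μ-1)` else. -/
def reNu (μ : ℝ) : ℝ := if μ ≤ 1/4 then Real.sqrt (1 - 4*μ) / 2 else 0

/-- `α(r,μ) = 1/2 + Re ν - d(2-r)/(2r)`. -/
def alphaExp (d : ℕ) (r μ : ℝ) : ℝ := 1/2 + reNu μ - d*(2-r)/(2*r)

/-- `δ = 1` if `μ = 1/4`, `δ = 0` otherwise. -/
def deltaExp (μ : ℝ) : ℝ := if μ = 1/4 then 1 else 0

/-- `v` is a solution of `∂ₜ²v - Δv + μ(1+t)⁻² v = 0` on `(t₀,∞) × ℝ^d` with data `(v₀, v₁)`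
at time `t₀`. -/
def IsSolKG (d : ℕ) (μ t₀ : ℝ) (v : ℝ → Ed d → ℝ) (v₀ v₁ : Ed d → ℝ) : Prop :=
  (∀ x, v t₀ x = v₀ x) ∧ (∀ x, dt1 v t₀ x = v₁ x) ∧
    ∀ t, t₀ < t → ∀ x, dt2 v t x - lapl (v t) x + μ / (1+t)^2 * v t x = 0

/-- `w` solves the free wave equation `∂ₜ²w - Δw = 0`; then `W(t)(w(0),∂ₜw(0)) = (w(t),∂ₜw(t))`. -/
def IsFreeWave (d : ℕ) (w : ℝ → Ed d → ℝ) : Prop :=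
  ∀ t x, dt2 w t x - lapl (w t) x = 0

/-- `u` solves (DW): `∂ₜ²u - Δu + μ₁(1+t)⁻¹∂ₜu + μ₂(1+t)⁻²u = 0` with data `(u₀,u₁)` at `t=0`. -/
def IsSolDW (d : ℕ) (μ₁ μ₂ : ℝ) (u : ℝ → Ed d → ℝ) (u₀ u₁ : Ed d → ℝ) : Prop :=
  (∀ x, u 0 x = u₀ x) ∧ (∀ x, dt1 u 0 x = u₁ x) ∧
    ∀ t, 0 < t → ∀ x,
      dt2 u t x - lapl (u t) x + μ₁/(1+t) * dt1 u t x + μ₂/(1+t)^2 * u t x = 0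

/-- `(f,g) ∈ Ḣ¹ × L²`. -/
def MemH1dotL2 (f g : Ed d → ℝ) : Prop :=
  MemLp (fun x => ‖fderiv ℝ f x‖) 2 (volume : Measure (Ed d)) ∧
    MemLp g 2 (volume : Measure (Ed d))

/-- The `Ḣ¹ × L²` distance between `v⃗(t) = (v(t),∂ₜv(t))` and `w⃗(t) = (w(t),∂ₜw(t))`. -/
def waveDist (v w : ℝ → Ed d → ℝ) (t : ℝ) : ℝ≥0∞ :=
  H1dotN (fun x => v t x - w t x) + L2N (fun x => dt1 v t x - dt1 w t x)

/-- `(v₀,v₁) ∈ Σ^r = (H¹ ∩ L^r) × (L² ∩ L^r)`. -/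
def MemSigma (r : ℝ) (v₀ v₁ : Ed d → ℝ) : Prop :=
  MemLp v₀ 2 (volume : Measure (Ed d)) ∧
  MemLp (fun x => ‖fderiv ℝ v₀ x‖) 2 (volume : Measure (Ed d)) ∧
  MemLp v₀ (ENNReal.ofReal r) (volume : Measure (Ed d)) ∧
  MemLp v₁ 2 (volume : Measure (Ed d)) ∧
  MemLp v₁ (ENNReal.ofReal r) (volume : Measure (Ed d))

/-- The `Σ^r` norm of `(v₀,v₁)`. -/
def sigmaNorm (r : ℝ) (v₀ v₁ : Ed d → ℝ) : ℝ≥0∞ :=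
  L2N v₀ + H1dotN v₀ + LrN r v₀ + L2N v₁ + LrN r v₁

/-- The homogeneous Sobolev `Ḣ^{-s}` norm, via the Fourier transform. -/
def HnegN (s : ℝ) (f : Ed d → ℝ) : ℝ≥0∞ :=
  eLpNorm (fun ξ : Ed d => ‖ξ‖ ^ (-s) * ‖𝓕 (fun x : Ed d => (f x : ℂ)) ξ‖) 2 volume

/-- `(v₀,v₁) ∈ E^{(s)} = (H¹ ∩ Ḣ^{-s}) × (L² ∩ Ḣ^{-s})`. -/
def MemEs (s : ℝ) (v₀ v₁ : Ed d → ℝ) : Prop :=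
  MemLp v₀ 2 (volume : Measure (Ed d)) ∧
  MemLp (fun x => ‖fderiv ℝ v₀ x‖) 2 (volume : Measure (Ed d)) ∧
  HnegN s v₀ < ⊤ ∧
  MemLp v₁ 2 (volume : Measure (Ed d)) ∧
  HnegN s v₁ < ⊤

/-- The `E^{(s)}` norm of `(v₀,v₁)`. -/
def esNorm (s : ℝ) (v₀ v₁ : Ed d → ℝ) : ℝ≥0∞ :=
  L2N v₀ + H1dotN v₀ + HnegN s v₀ + L2N v₁ + HnegN s v₁

/-- The energy of (KG). -/
def energyKG (d : ℕ) (μ : ℝ) (v : ℝ → Ed d → ℝ) (t : ℝ) : ℝ :=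
  (1/2) * (∫ x, (dt1 v t x)^2) + (1/2) * (∫ x, ‖fderiv ℝ (v t) x‖^2) +
    μ/(2*(1+t)^2) * (∫ x, (v t x)^2)

/-- The frequency region `Z₂(t,t₀,N) = {ξ : (1+t₀)|ξ| ≤ N ≤ (1+t)|ξ|}`. -/
def Z2 (d : ℕ) (t₀ t N : ℝ) : Set (Ed d) :=
  {ξ : Ed d | (1+t₀) * ‖ξ‖ ≤ N ∧ N ≤ (1+t) * ‖ξ‖}

/-!
`Z₂(t, t₀, N)` is the closed annulus `N/(1+t) ≤ |ξ| ≤ N/(1+t₀)`. In polar coordinates the `p`-th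
power of the `Lᵖ` norm of `|ξ|^e` over an annulus `a ≤ |ξ| ≤ b` is `d |B₁| ∫ₐᵇ y^(ps-1) dy` with
`s = e + d/p`; for `e = -1/2 - ρ` and `p = 2r/(2-r)` this is `s = -α`. The radial integral is
`(b^(ps) - a^(ps))/(ps)`, dominated by the outer radius `N/(1+t₀)` when `α < 0` and by the inner
radius `N/(1+t)` when `α > 0`; when `α = 0` it is `log (b/a) ≤ log (1+t)`, and `p = 2` for `r = 1`.
-/

open Set

theorem integral_rpow_sub_one {a b k : ℝ} (ha : 0 < a) (hb : 0 < b) (hk : k ≠ 0) :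
    ∫ y in a..b, y ^ (k - 1) = (b ^ k - a ^ k) / k := by
  rw [integral_rpow (.inr ⟨by simpa using hk, notMem_uIcc_of_lt ha hb⟩), sub_add_cancel]

theorem div_rpow_eq_mul_rpow_neg {x y : ℝ} (hx : 0 ≤ x) (hy : 0 ≤ y) (s : ℝ) :
    (x / y) ^ s = x ^ s * y ^ (-s) := by
  rw [Real.div_rpow hx hy, Real.rpow_neg hy, div_eq_mul_inv]

theorem rpow_one_div_le_mul_rpow {x K y p β : ℝ} (hx : 0 ≤ x) (hK : 0 ≤ K) (hy : 0 ≤ y)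
    (hp : 0 < p) (h : x ≤ K * y ^ (p * β)) : x ^ (1 / p) ≤ K ^ (1 / p) * y ^ β := by
  calc x ^ (1 / p) ≤ (K * y ^ (p * β)) ^ (1 / p) := by gcongr
    _ = K ^ (1 / p) * y ^ β := by
      rw [Real.mul_rpow hK (by positivity), ← Real.rpow_mul hy, mul_comm p, mul_assoc,
        mul_one_div_cancel hp.ne', mul_one]

section Annulus

variable {E : Type*} [NormedAddCommGroup E] {a b : ℝ}

local notation "dim" => Module.finrank ℝ

theorem annulus_eq_empty [Subsingleton E] (ha : 0 < a) : (‖·‖) ⁻¹' Icc a b = (∅ : Set E) :=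
  eq_empty_of_forall_notMem fun x hx => by
    simpa [Subsingleton.elim x 0] using ha.trans_le hx.1

variable [NormedSpace ℝ E] [FiniteDimensional ℝ E]

theorem isCompact_annulus (a b : ℝ) : IsCompact ((‖·‖) ⁻¹' Icc a b : Set E) :=
  (isCompact_closedBall (0 : E) b).of_isClosed_subset
    (isClosed_Icc.preimage continuous_norm) fun _ hx => mem_closedBall_zero_iff.mpr hx.2

variable [MeasurableSpace E] (μ : Measure E) [μ.IsAddHaarMeasure]

theorem finrank_mul_measureReal_unitBall_pos [Nontrivial E] :
    0 < dim E * μ.real (Metric.ball 0 1) :=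
  mul_pos (by exact_mod_cast Module.finrank_pos)
    (ENNReal.toReal_pos (Metric.measure_ball_pos μ 0 one_pos).ne' measure_ball_lt_top.ne)

variable [BorelSpace E]

theorem setIntegral_rpow_norm_annulus [Nontrivial E] (ha : 0 < a) (hab : a ≤ b) (q : ℝ) :
    ∫ x in (‖·‖) ⁻¹' Icc a b, ‖x‖ ^ q ∂μ
      = dim E * μ.real (Metric.ball 0 1) * ∫ y in a..b, y ^ ((dim E : ℝ) - 1 + q) := by
  have hS : MeasurableSet ((‖·‖) ⁻¹' Icc a b : Set E) :=
    measurableSet_Icc.preimage continuous_norm.measurable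
  have hdim : ((dim E - 1 : ℕ) : ℝ) = dim E - 1 := by
    rw [Nat.cast_sub Module.finrank_pos, Nat.cast_one]
  have hcomp (x : E) : ((‖·‖) ⁻¹' Icc a b).indicator (fun x => ‖x‖ ^ q) x
      = (Icc a b).indicator (· ^ q) ‖x‖ :=
    indicator_comp_right (‖·‖) (g := (· ^ q))
  have hsmul (y : ℝ) : y ^ (dim E - 1) • (Icc a b).indicator (· ^ q) y
      = (Icc a b).indicator (fun y => y ^ (dim E - 1) • y ^ q) y :=
    (indicator_smul_apply (Icc a b) (· ^ (dim E - 1)) (· ^ q) y).symm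
  rw [← integral_indicator hS, integral_congr_ae (.of_forall hcomp), integral_fun_norm_addHaar μ,
    nsmul_eq_mul, smul_eq_mul, mul_assoc, intervalIntegral.integral_of_le hab,
    ← integral_Icc_eq_integral_Ioc, setIntegral_congr_fun measurableSet_Ioi fun y _ => hsmul y,
    setIntegral_indicator measurableSet_Icc, inter_eq_right.mpr (Icc_subset_Ioi_iff hab |>.mpr ha)]
  refine congrArg _ (congrArg _ (setIntegral_congr_fun measurableSet_Icc fun y hy => ?_))
  rw [← Real.rpow_natCast, hdim, smul_eq_mul, ← Real.rpow_add (ha.trans_le hy.1)]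

theorem eLpNorm_rpow_norm_annulus [Nontrivial E] {p : ℝ} (hp : 0 < p) (ha : 0 < a) (hab : a ≤ b)
    (e : ℝ) :
    eLpNorm (fun x => ‖x‖ ^ e) (ENNReal.ofReal p) (μ.restrict ((‖·‖) ⁻¹' Icc a b))
      = ENNReal.ofReal ((dim E * μ.real (Metric.ball 0 1) *
          ∫ y in a..b, y ^ ((dim E : ℝ) - 1 + e * p)) ^ (1 / p)) := by
  have hint : IntegrableOn (fun x : E => ‖x‖ ^ (e * p)) ((‖·‖) ⁻¹' Icc a b) μ :=
    (ContinuousOn.rpow_const continuous_norm.continuousOn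
      fun x hx => .inl (ha.trans_le hx.1).ne').integrableOn_compact (isCompact_annulus a b)
  have hpow (x : E) : ‖‖x‖ ^ e‖ₑ ^ p = ENNReal.ofReal (‖x‖ ^ (e * p)) := by
    rw [Real.enorm_eq_ofReal (by positivity), ENNReal.ofReal_rpow_of_nonneg (by positivity) hp.le,
      ← Real.rpow_mul (norm_nonneg x)]
  rw [eLpNorm_eq_lintegral_rpow_enorm_toReal (by simpa using hp) ENNReal.ofReal_ne_top,
    ENNReal.toReal_ofReal hp.le, lintegral_congr hpow,
    ← ofReal_integral_eq_lintegral_ofReal hint (.of_forall fun x => by positivity),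
    setIntegral_rpow_norm_annulus μ ha hab, ENNReal.ofReal_rpow_of_nonneg _ (by positivity)]
  exact mul_nonneg (by positivity) (intervalIntegral.integral_nonneg hab
    fun y hy => Real.rpow_nonneg (ha.le.trans hy.1) _)

theorem exists_eLpNorm_rpow_norm_annulus_le_of_pos {p e : ℝ} (hp : 0 < p)
    (hs : 0 < e + dim E / p) :
    ∃ C > 0, ∀ a b : ℝ, 0 < a → a ≤ b →
      eLpNorm (fun x => ‖x‖ ^ e) (ENNReal.ofReal p) (μ.restrict ((‖·‖) ⁻¹' Icc a b))
        ≤ ENNReal.ofReal (C * b ^ (e + dim E / p)) := by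
  rcases subsingleton_or_nontrivial E with hE | hE
  · exact ⟨1, one_pos, fun a b ha _ => by simp [annulus_eq_empty ha]⟩
  set s := e + dim E / p
  set c := dim E * μ.real (Metric.ball 0 1)
  have hc : 0 < c := finrank_mul_measureReal_unitBall_pos μ
  refine ⟨(c / (p * s)) ^ (1 / p), by positivity, fun a b ha hab => ?_⟩
  have hexp : (dim E : ℝ) - 1 + e * p = p * s - 1 := by simp only [s]; field_simp; ring
  rw [eLpNorm_rpow_norm_annulus μ hp ha hab, hexp,
    integral_rpow_sub_one ha (ha.trans_le hab) (by positivity)]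
  refine ENNReal.ofReal_le_ofReal
    (rpow_one_div_le_mul_rpow ?_ (by positivity) (by linarith) hp ?_)
  · have : a ^ (p * s) ≤ b ^ (p * s) := by gcongr
    exact mul_nonneg hc.le (div_nonneg (sub_nonneg.mpr this) (by positivity))
  · calc c * ((b ^ (p * s) - a ^ (p * s)) / (p * s)) ≤ c * (b ^ (p * s) / (p * s)) := by
          gcongr; exact sub_le_self _ (by positivity)
      _ = c / (p * s) * b ^ (p * s) := by ring

theorem exists_eLpNorm_rpow_norm_annulus_le_of_neg {p e : ℝ} (hp : 0 < p)
    (hs : e + dim E / p < 0) :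
    ∃ C > 0, ∀ a b : ℝ, 0 < a → a ≤ b →
      eLpNorm (fun x => ‖x‖ ^ e) (ENNReal.ofReal p) (μ.restrict ((‖·‖) ⁻¹' Icc a b))
        ≤ ENNReal.ofReal (C * a ^ (e + dim E / p)) := by
  rcases subsingleton_or_nontrivial E with hE | hE
  · exact ⟨1, one_pos, fun a b ha _ => by simp [annulus_eq_empty ha]⟩
  set s := e + dim E / p
  set c := dim E * μ.real (Metric.ball 0 1)
  have hc : 0 < c := finrank_mul_measureReal_unitBall_pos μ
  have hκ : 0 < -(p * s) := by nlinarith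
  refine ⟨(c / -(p * s)) ^ (1 / p), by positivity, fun a b ha hab => ?_⟩
  have hexp : (dim E : ℝ) - 1 + e * p = p * s - 1 := by simp only [s]; field_simp; ring
  rw [eLpNorm_rpow_norm_annulus μ hp ha hab, hexp,
    integral_rpow_sub_one ha (ha.trans_le hab) (by linarith), ← neg_div_neg_eq, neg_sub]
  refine ENNReal.ofReal_le_ofReal (rpow_one_div_le_mul_rpow ?_ (by positivity) ha.le hp ?_)
  · have : b ^ (p * s) ≤ a ^ (p * s) := Real.rpow_le_rpow_of_nonpos ha hab (by linarith)
    exact mul_nonneg hc.le (div_nonneg (sub_nonneg.mpr this) hκ.le)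
  · calc c * ((a ^ (p * s) - b ^ (p * s)) / -(p * s)) ≤ c * (a ^ (p * s) / -(p * s)) := by
          gcongr; exact sub_le_self _ (Real.rpow_nonneg (ha.le.trans hab) _)
      _ = c / -(p * s) * a ^ (p * s) := by ring

theorem exists_eLpNorm_rpow_norm_annulus_le_of_eq_zero {p e : ℝ} (hp : 0 < p)
    (hs : e + dim E / p = 0) :
    ∃ C > 0, ∀ a b : ℝ, 0 < a → a ≤ b →
      eLpNorm (fun x => ‖x‖ ^ e) (ENNReal.ofReal p) (μ.restrict ((‖·‖) ⁻¹' Icc a b))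
        ≤ ENNReal.ofReal (C * Real.log (b / a) ^ (1 / p)) := by
  rcases subsingleton_or_nontrivial E with hE | hE
  · exact ⟨1, one_pos, fun a b ha _ => by simp [annulus_eq_empty ha]⟩
  have hc := finrank_mul_measureReal_unitBall_pos μ
  refine ⟨(dim E * μ.real (Metric.ball 0 1)) ^ (1 / p), Real.rpow_pos_of_pos hc _,
    fun a b ha hab => ?_⟩
  have hexp : (dim E : ℝ) - 1 + e * p = -1 := by
    have : e * p = -dim E := by field_simp at hs; linarith
    linarith
  have hlog : 0 ≤ Real.log (b / a) := Real.log_nonneg ((one_le_div ha).mpr hab)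
  simp_rw [eLpNorm_rpow_norm_annulus μ hp ha hab, hexp, Real.rpow_neg_one,
    integral_inv_of_pos ha (ha.trans_le hab), Real.mul_rpow hc.le hlog, le_refl]

end Annulus

section Z2

variable {p e N t₀ t : ℝ}

theorem Z2_eq_annulus (ht₀ : 0 < 1 + t₀) (ht : 0 < 1 + t) :
    Z2 d t₀ t N = (‖·‖) ⁻¹' Icc (N / (1 + t)) (N / (1 + t₀)) := by
  ext ξ
  simp only [Z2, mem_ofPred_eq, mem_preimage, mem_Icc, div_le_iff₀ ht, le_div_iff₀ ht₀, mul_comm,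
    and_comm]

theorem div_one_add_pos_and_le (hN : 0 < N) (ht₀ : 0 ≤ t₀) (ht : t₀ ≤ t) :
    0 < N / (1 + t) ∧ N / (1 + t) ≤ N / (1 + t₀) :=
  ⟨by have : 0 < 1 + t := by linarith
      positivity,
   div_le_div_of_nonneg_left hN.le (by linarith) (by linarith)⟩

theorem exists_eLpNorm_rpow_norm_Z2_le_of_pos (hp : 0 < p) (hN : 0 < N) (hs : 0 < e + d / p) :
    ∃ C > 0, ∀ t₀ t : ℝ, 0 ≤ t₀ → t₀ ≤ t →
      eLpNorm (fun ξ : Ed d => ‖ξ‖ ^ e) (ENNReal.ofReal p) (volume.restrict (Z2 d t₀ t N))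
        ≤ ENNReal.ofReal (C * (1 + t₀) ^ (-(e + d / p))) := by
  obtain ⟨C, hC, hbound⟩ := exists_eLpNorm_rpow_norm_annulus_le_of_pos (volume : Measure (Ed d)) hp
    (by simpa using hs)
  refine ⟨C * N ^ (e + d / p), by positivity, fun t₀ t ht₀ ht => ?_⟩
  obtain ⟨ha, hab⟩ := div_one_add_pos_and_le hN ht₀ ht
  rw [Z2_eq_annulus (by linarith) (by linarith), mul_assoc,
    ← div_rpow_eq_mul_rpow_neg hN.le (by linarith)]
  simpa using hbound _ _ ha hab

theorem exists_eLpNorm_rpow_norm_Z2_le_of_neg (hp : 0 < p) (hN : 0 < N) (hs : e + d / p < 0) :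
    ∃ C > 0, ∀ t₀ t : ℝ, 0 ≤ t₀ → t₀ ≤ t →
      eLpNorm (fun ξ : Ed d => ‖ξ‖ ^ e) (ENNReal.ofReal p) (volume.restrict (Z2 d t₀ t N))
        ≤ ENNReal.ofReal (C * (1 + t) ^ (-(e + d / p))) := by
  obtain ⟨C, hC, hbound⟩ := exists_eLpNorm_rpow_norm_annulus_le_of_neg (volume : Measure (Ed d)) hp
    (by simpa using hs)
  refine ⟨C * N ^ (e + d / p), by positivity, fun t₀ t ht₀ ht => ?_⟩
  obtain ⟨ha, hab⟩ := div_one_add_pos_and_le hN ht₀ ht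
  rw [Z2_eq_annulus (by linarith) (by linarith), mul_assoc,
    ← div_rpow_eq_mul_rpow_neg hN.le (by linarith)]
  simpa using hbound _ _ ha hab

theorem exists_eLpNorm_rpow_norm_Z2_le_of_eq_zero (hp : 0 < p) (hN : 0 < N)
    (hs : e + d / p = 0) :
    ∃ C > 0, ∀ t₀ t : ℝ, 0 ≤ t₀ → t₀ ≤ t →
      eLpNorm (fun ξ : Ed d => ‖ξ‖ ^ e) (ENNReal.ofReal p) (volume.restrict (Z2 d t₀ t N))
        ≤ ENNReal.ofReal (C * Real.log (1 + t) ^ (1 / p)) := by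
  obtain ⟨C, hC, hbound⟩ :=
    exists_eLpNorm_rpow_norm_annulus_le_of_eq_zero (volume : Measure (Ed d)) hp (by simpa using hs)
  refine ⟨C, hC, fun t₀ t ht₀ ht => ?_⟩
  obtain ⟨ha, hab⟩ := div_one_add_pos_and_le hN ht₀ ht
  have hratio : N / (1 + t₀) / (N / (1 + t)) = (1 + t) / (1 + t₀) := by
    field_simp
  have hlog : Real.log ((1 + t) / (1 + t₀)) ≤ Real.log (1 + t) :=
    Real.log_le_log (div_pos (by linarith) (by linarith)) (div_le_self (by linarith) (by linarith))
  rw [Z2_eq_annulus (by linarith) (by linarith)]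
  refine (hbound _ _ ha hab).trans (ENNReal.ofReal_le_ofReal ?_)
  have hlog₀ : 0 ≤ Real.log ((1 + t) / (1 + t₀)) :=
    Real.log_nonneg ((one_le_div (by linarith)).mpr (by linarith))
  rw [hratio]
  exact mul_le_mul_of_nonneg_left (Real.rpow_le_rpow hlog₀ hlog (by positivity)) hC.le

end Z2

theorem Z2_multiplier_estimate_general (d : ℕ) (r ρ N : ℝ) (hr1 : 1 ≤ r) (hr2 : r < 2)
    (hN : 0 < N) :
    ∃ C : ℝ, 0 < C ∧ ∀ t₀ t : ℝ, 0 ≤ t₀ → t₀ ≤ t →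
      ((1/2 + ρ - d*(2-r)/(2*r) < 0 →
        eLpNorm (fun ξ : Ed d => ‖ξ‖ ^ (-(1/2) - ρ)) (ENNReal.ofReal (2*r/(2-r)))
            ((volume : Measure (Ed d)).restrict (Z2 d t₀ t N)) ≤
          ENNReal.ofReal (C * (1+t₀) ^ (1/2 + ρ - d*(2-r)/(2*r)))) ∧
       (1/2 + ρ - d*(2-r)/(2*r) = 0 ∧ r = 1 →
        eLpNorm (fun ξ : Ed d => ‖ξ‖ ^ (-(1/2) - ρ)) (ENNReal.ofReal (2*r/(2-r)))
            ((volume : Measure (Ed d)).restrict (Z2 d t₀ t N)) ≤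
          ENNReal.ofReal (C * (Real.log (1+t)) ^ (1/2 : ℝ))) ∧
       (0 < 1/2 + ρ - d*(2-r)/(2*r) →
        eLpNorm (fun ξ : Ed d => ‖ξ‖ ^ (-(1/2) - ρ)) (ENNReal.ofReal (2*r/(2-r)))
            ((volume : Measure (Ed d)).restrict (Z2 d t₀ t N)) ≤
          ENNReal.ofReal (C * (1+t) ^ (1/2 + ρ - d*(2-r)/(2*r))))) := by
  have hp : 0 < 2 * r / (2 - r) := div_pos (by linarith) (by linarith)
  have hs : -(1/2) - ρ + d / (2 * r / (2 - r)) = -(1/2 + ρ - d*(2-r)/(2*r)) := by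
    field_simp
    ring
  rcases lt_trichotomy (1/2 + ρ - d*(2-r)/(2*r)) 0 with hα | hα | hα
  · obtain ⟨C, hC, hbound⟩ := exists_eLpNorm_rpow_norm_Z2_le_of_pos (d := d) (e := -(1/2) - ρ)
      hp hN (by linarith)
    refine ⟨C, hC, fun t₀ t ht₀ ht =>
      ⟨fun _ => ?_, fun h => absurd h.1 hα.ne, fun h => absurd h hα.not_gt⟩⟩
    simpa only [hs, neg_neg] using hbound t₀ t ht₀ ht
  · obtain ⟨C, hC, hbound⟩ := exists_eLpNorm_rpow_norm_Z2_le_of_eq_zero (d := d) (e := -(1/2) - ρ)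
      hp hN (by linarith)
    refine ⟨C, hC, fun t₀ t ht₀ ht =>
      ⟨fun h => absurd hα h.ne, fun ⟨_, hr⟩ => ?_, fun h => absurd hα h.ne'⟩⟩
    subst hr
    norm_num at hbound ⊢
    exact hbound t₀ t ht₀ ht
  · obtain ⟨C, hC, hbound⟩ := exists_eLpNorm_rpow_norm_Z2_le_of_neg (d := d) (e := -(1/2) - ρ)
      hp hN (by linarith)
    refine ⟨C, hC, fun t₀ t ht₀ ht =>
      ⟨fun h => absurd h hα.not_gt, fun h => absurd h.1 hα.ne', fun _ => ?_⟩⟩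
    simpa only [hs, neg_neg] using hbound t₀ t ht₀ ht

/-- **Key multiplier estimate in `Z₂`.** Bounds for the `L^{2r/(2-r)}(Z₂)` norm of
`|ξ|^{-1/2-ρ}`, with `α = 1/2 + ρ - d(2-r)/(2r)`, with a constant depending only on
`d, r, ρ, N`. -/
theorem Z2_multiplier_estimate (d : ℕ) (r ρ N : ℝ) (hr1 : 1 ≤ r) (hr2 : r < 2)
    (hρ : 0 ≤ ρ) (hN : 0 < N) :
    ∃ C : ℝ, 0 < C ∧ ∀ t₀ t : ℝ, 0 ≤ t₀ → t₀ ≤ t →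
      ((1/2 + ρ - d*(2-r)/(2*r) < 0 →
        eLpNorm (fun ξ : Ed d => ‖ξ‖ ^ (-(1/2) - ρ)) (ENNReal.ofReal (2*r/(2-r)))
            ((volume : Measure (Ed d)).restrict (Z2 d t₀ t N)) ≤
          ENNReal.ofReal (C * (1+t₀) ^ (1/2 + ρ - d*(2-r)/(2*r)))) ∧
       (1/2 + ρ - d*(2-r)/(2*r) = 0 ∧ r = 1 →
        eLpNorm (fun ξ : Ed d => ‖ξ‖ ^ (-(1/2) - ρ)) (ENNReal.ofReal (2*r/(2-r)))
            ((volume : Measure (Ed d)).restrict (Z2 d t₀ t N)) ≤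
          ENNReal.ofReal (C * (Real.log (1+t)) ^ (1/2 : ℝ))) ∧
       (0 < 1/2 + ρ - d*(2-r)/(2*r) →
        eLpNorm (fun ξ : Ed d => ‖ξ‖ ^ (-(1/2) - ρ)) (ENNReal.ofReal (2*r/(2-r)))
            ((volume : Measure (Ed d)).restrict (Z2 d t₀ t N)) ≤
          ENNReal.ofReal (C * (1+t) ^ (1/2 + ρ - d*(2-r)/(2*r))))) :=
  Z2_multiplier_estimate_general d r ρ N hr1 hr2 hN
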